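/- Let t ↦ Z_t be a bounded measurable family of 2d×m real matrices on [0,1]. Let (s,t) ↦ ηˢ(t) ∈ ℝ^{2d} be a C¹ family such that for each s the curve t ↦ ηˢ(t) solves η̇ = s·Z_t Z_tᵀ J η and the q-component of ηˢ(0) is zero for every s. Then for every s, ⟨J ηˢ(1), ∂ηˢ/∂s (1)⟩ = ∫₀¹ |Z_tᵀ J ηˢ(t)|² dt. -/

import Mathlib

open MeasureTheory Filter Topology Matrix

noncomputable section

/-- The standard symplectic `2d × 2d` matrix `J = [[0, -I],[I, 0]]`, over `ℝ`. -/
def Jmat (d : ℕ) : Matrix (Fin (d + d)) (Fin (d + d)) ℝ :=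
  Matrix.reindex finSumFinEquiv finSumFinEquiv (Matrix.fromBlocks 0 (-1) 1 0)

/-- The bottom `d × m` block `X_t` of the block matrix `Z_t = (Y_t; X_t)`. -/
def Xblock {d m : ℕ} (Z : ℝ → Matrix (Fin (d + d)) (Fin m) ℝ) (t : ℝ) :
    Matrix (Fin d) (Fin m) ℝ :=
  Matrix.of fun i j => Z t (finSumFinEquiv (Sum.inr i)) j

/-- Entrywise integral of a matrix-valued function over a subset of `ℝ`. -/
def mSetIntegral {n p : Type*} (s : Set ℝ) (f : ℝ → Matrix n p ℝ) : Matrix n p ℝ :=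
  Matrix.of fun i j => ∫ t in s, f t i j

/-- Carathéodory solution of `η̇ = s · Z_t Z_tᵀ J η` on `[0,1]`,
via the equivalent integral equation. -/
def IsScaledJacobiSolution {d m : ℕ} (Z : ℝ → Matrix (Fin (d + d)) (Fin m) ℝ)
    (s : ℝ) (η : ℝ → Fin (d + d) → ℝ) : Prop :=
  ∀ t ∈ Set.Icc (0:ℝ) 1,
    η t = η 0 + ∫ τ in (0:ℝ)..t, s • (Z τ * (Z τ)ᵀ * Jmat d).mulVec (η τ)

/-!
Fix `s` and let `u` vary. The function `t ↦ ⟨J ηˢ(t), ηᵘ(t)⟩` is absolutely continuous, and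
because `J` is skew its derivative is `(u - s) ⟨Zᵀ J ηˢ, Zᵀ J ηᵘ⟩` almost everywhere. Integrating,
`⟨J ηˢ(1), ηᵘ(1)⟩ = ⟨J ηˢ(0), ηᵘ(0)⟩ + (u - s) K(u)` with `K(u) = ∫₀¹ ⟨Zᵀ J ηˢ, Zᵀ J ηᵘ⟩`.
Differentiate in `u` at `u = s`: the first term contributes `⟨J ηˢ(0), ∂ₛηˢ(0)⟩ = 0`, both vectors
lying in the Lagrangian subspace `{q = 0}`, and the second contributes `K(s)` since `K` is
continuous (dominated convergence).
-/

open Set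

section Primitive

variable {E : Type*} [NormedAddCommGroup E] [NormedSpace ℝ E] {f F : ℝ → E} {a b : ℝ}

theorem ContinuousLinearMap.map_eq_add_intervalIntegral [CompleteSpace E] {E' : Type*}
    [NormedAddCommGroup E'] [NormedSpace ℝ E'] [CompleteSpace E'] (L : E →L[ℝ] E')
    (hf : IntervalIntegrable f volume a b) (hF : ∀ t ∈ Icc a b, F t = F a + ∫ τ in a..t, f τ) :
    ∀ t ∈ Icc a b, L (F t) = L (F a) + ∫ τ in a..t, L (f τ) := by
  intro t ht
  have hft : IntervalIntegrable f volume a t :=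
    hf.mono_set (uIcc_subset_uIcc left_mem_uIcc (Icc_subset_uIcc ht))
  rw [hF t ht, map_add, L.intervalIntegral_comp_comm hft]

theorem continuousOn_of_eq_add_intervalIntegral (hf : IntervalIntegrable f volume a b)
    (hF : ∀ t ∈ Icc a b, F t = F a + ∫ τ in a..t, f τ) : ContinuousOn F (Icc a b) :=
  ((continuousOn_const.add (intervalIntegral.continuousOn_primitive_interval' hf
    left_mem_uIcc)).mono Icc_subset_uIcc).congr hF

end Primitive

theorem integral_mul_add_mul_eq_sub_of_eq_add_intervalIntegral {f g F G : ℝ → ℝ} {a b : ℝ}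
    (hab : a ≤ b) (hf : IntervalIntegrable f volume a b) (hg : IntervalIntegrable g volume a b)
    (hF : ∀ t ∈ Icc a b, F t = F a + ∫ τ in a..t, f τ)
    (hG : ∀ t ∈ Icc a b, G t = G a + ∫ τ in a..t, g τ) :
    ∫ t in a..b, (f t * G t + F t * g t) = F b * G b - F a * G a := by
  have hconst (c : ℝ) : AbsolutelyContinuousOnInterval (fun _ => c) a b :=
    (LipschitzWith.const c).lipschitzOnWith.absolutelyContinuousOnInterval
  have hF' := (hconst (F a)).fun_add
    (hf.absolutelyContinuousOnInterval_intervalIntegral left_mem_uIcc)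
  have hG' := (hconst (G a)).fun_add
    (hg.absolutelyContinuousOnInterval_intervalIntegral left_mem_uIcc)
  have hb : b ∈ Icc a b := right_mem_Icc.2 hab
  have key := hF'.integral_deriv_mul_eq_sub hG'
  simp only [intervalIntegral.integral_same, add_zero, ← hF b hb, ← hG b hb] at key
  rw [← key]
  refine intervalIntegral.integral_congr_ae ?_
  -- Lebesgue differentiation: the primitives have derivatives `f` and `g` almost everywhere.
  filter_upwards [hf.ae_hasDerivAt_integral, hg.ae_hasDerivAt_integral] with t hft hgt ht
  rw [uIoc_of_le hab] at ht
  have htu : t ∈ uIcc a b := by rw [uIcc_of_le hab]; exact Ioc_subset_Icc_self ht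
  rw [((hft htu a left_mem_uIcc).const_add (F a)).deriv,
    ((hgt htu a left_mem_uIcc).const_add (G a)).deriv,
    hF t (Ioc_subset_Icc_self ht), hG t (Ioc_subset_Icc_self ht)]

theorem integral_dotProduct_add_dotProduct_eq_sub_of_eq_add_intervalIntegral {ι : Type*}
    [Fintype ι] {f g F G : ℝ → ι → ℝ} {a b : ℝ}
    (hab : a ≤ b) (hf : IntervalIntegrable f volume a b) (hg : IntervalIntegrable g volume a b)
    (hF : ∀ t ∈ Icc a b, F t = F a + ∫ τ in a..t, f τ)
    (hG : ∀ t ∈ Icc a b, G t = G a + ∫ τ in a..t, g τ) :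
    ∫ t in a..b, (f t ⬝ᵥ G t + F t ⬝ᵥ g t) = F b ⬝ᵥ G b - F a ⬝ᵥ G a := by
  let π i := ContinuousLinearMap.proj (R := ℝ) (φ := fun _ : ι => ℝ) i
  have hfi i : IntervalIntegrable (fun t => f t i) volume a b :=
    ⟨(π i).integrable_comp hf.1, (π i).integrable_comp hf.2⟩
  have hgi i : IntervalIntegrable (fun t => g t i) volume a b :=
    ⟨(π i).integrable_comp hg.1, (π i).integrable_comp hg.2⟩
  have hFc i : ContinuousOn (fun t => F t i) (uIcc a b) := by
    rw [uIcc_of_le hab]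
    exact (continuous_apply i).comp_continuousOn (continuousOn_of_eq_add_intervalIntegral hf hF)
  have hGc i : ContinuousOn (fun t => G t i) (uIcc a b) := by
    rw [uIcc_of_le hab]
    exact (continuous_apply i).comp_continuousOn (continuousOn_of_eq_add_intervalIntegral hg hG)
  simp only [dotProduct, ← Finset.sum_add_distrib, ← Finset.sum_sub_distrib]
  rw [intervalIntegral.integral_finsetSum fun i _ =>
    ((hfi i).mul_continuousOn (hGc i)).add ((hgi i).continuousOn_mul (hFc i))]
  exact Finset.sum_congr rfl fun i _ =>
    integral_mul_add_mul_eq_sub_of_eq_add_intervalIntegral hab (hfi i) (hgi i)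
      ((π i).map_eq_add_intervalIntegral hf hF) ((π i).map_eq_add_intervalIntegral hg hG)

section BoundedEntries

variable {n p : Type*}

theorem stronglyMeasurable_of_measurable_apply [Countable n] [Countable p] {α : Type*}
    [MeasurableSpace α] {Z : α → Matrix n p ℝ} (hZ : ∀ i j, Measurable fun t => Z t i j) : StronglyMeasurable Z :=
  (measurable_pi_iff.2 fun i => measurable_pi_iff.2 (hZ i) :
    @Measurable α (n → p → ℝ) _ MeasurableSpace.pi Z).stronglyMeasurable

theorem isCompact_setOf_abs_apply_le (C : ℝ) :
    IsCompact {M : Matrix n p ℝ | ∀ i j, |M i j| ≤ C} := by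
  have h : {M : Matrix n p ℝ | ∀ i j, |M i j| ≤ C}
      = univ.pi fun _ => univ.pi fun _ => Icc (-C) C := by
    ext M
    exact ⟨fun h i _ j _ => abs_le.1 (h i j), fun h i j => abs_le.2 (h i trivial j trivial)⟩
  rw [h]
  exact isCompact_univ_pi fun _ => isCompact_univ_pi fun _ => isCompact_Icc

theorem exists_bound_of_abs_apply_le {X E : Type*} [TopologicalSpace X]
    [SeminormedAddCommGroup E] {G : Matrix n p ℝ × X → E} (hG : Continuous G) {V : Set X}
    (hV : IsCompact V) (C : ℝ) :
    ∃ B, ∀ M : Matrix n p ℝ, (∀ i j, |M i j| ≤ C) → ∀ x ∈ V, ‖G (M, x)‖ ≤ B := by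
  obtain ⟨B, hB⟩ := ((isCompact_setOf_abs_apply_le C).prod hV).exists_bound_of_continuousOn
    hG.continuousOn
  exact ⟨B, fun M hM x hx => hB (M, x) ⟨hM, hx⟩⟩

variable {E : Type*} [NormedAddCommGroup E] {Z : ℝ → Matrix n p ℝ} {a b C : ℝ}

theorem intervalIntegrable_comp_of_abs_apply_le {G : Matrix n p ℝ × ℝ → E} (hG : Continuous G)
    (hZ : StronglyMeasurable Z) (hab : a ≤ b) (hC : ∀ t ∈ Icc a b, ∀ i j, |Z t i j| ≤ C) :
    IntervalIntegrable (fun t => G (Z t, t)) volume a b := by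
  obtain ⟨B, hB⟩ := exists_bound_of_abs_apply_le hG isCompact_Icc C (V := Icc a b)
  rw [intervalIntegrable_iff_integrableOn_Icc_of_le hab]
  refine IntegrableOn.of_bound measure_Icc_lt_top
    (hG.comp_stronglyMeasurable (hZ.prodMk stronglyMeasurable_id)).aestronglyMeasurable B ?_
  filter_upwards [ae_restrict_mem measurableSet_Icc] with t ht using hB _ (hC t ht) t ht

theorem continuousAt_setIntegral_comp_of_abs_apply_le [NormedSpace ℝ E]
    {G : Matrix n p ℝ × ℝ × ℝ → E} (hG : Continuous G) (hZ : StronglyMeasurable Z)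
    (hC : ∀ t ∈ Icc a b, ∀ i j, |Z t i j| ≤ C) (u₀ : ℝ) :
    ContinuousAt (fun u => ∫ t in Icc a b, G (Z t, u, t)) u₀ := by
  obtain ⟨B, hB⟩ := exists_bound_of_abs_apply_le hG (isCompact_Icc.prod isCompact_Icc) C
    (V := Icc (u₀ - 1) (u₀ + 1) ×ˢ Icc a b)
  refine continuousAt_of_dominated (bound := fun _ => B) (Eventually.of_forall fun u =>
    (hG.comp_stronglyMeasurable (hZ.prodMk (stronglyMeasurable_const.prodMk
      stronglyMeasurable_id))).aestronglyMeasurable) ?_ (integrable_const B)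
    (Eventually.of_forall fun t =>
      (hG.comp (continuous_const.prodMk (continuous_id.prodMk continuous_const))).continuousAt)
  filter_upwards [Icc_mem_nhds (sub_one_lt u₀) (lt_add_one u₀)] with u hu
  filter_upwards [ae_restrict_mem measurableSet_Icc] with t ht using
    hB _ (hC t ht) (u, t) ⟨hu, ht⟩

section Transpose

variable {n p : Type*} [Fintype n] [Fintype p] {Z : ℝ → Matrix n p ℝ} {J : Matrix n n ℝ}
  {a b C : ℝ}

theorem intervalIntegrable_smul_mul_transpose_mulVec (hZ : StronglyMeasurable Z) (hab : a ≤ b)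
    (hC : ∀ t ∈ Icc a b, ∀ i j, |Z t i j| ≤ C) {ξ : ℝ → n → ℝ} (hξ : Continuous ξ) (s : ℝ) :
    IntervalIntegrable (fun t => s • (Z t * (Z t)ᵀ * J) *ᵥ ξ t) volume a b := by
  refine intervalIntegrable_comp_of_abs_apply_le (G := fun q => s • (q.1 * q.1ᵀ * J) *ᵥ ξ q.2)
    ?_ hZ hab hC
  have hξ' : Continuous fun q : Matrix n p ℝ × ℝ => ξ q.2 := hξ.comp continuous_snd
  fun_prop

theorem continuousAt_setIntegral_transpose_mulVec_dotProduct (hZ : StronglyMeasurable Z)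
    (hC : ∀ t ∈ Icc a b, ∀ i j, |Z t i j| ≤ C) {ξ : ℝ → n → ℝ} (hξ : Continuous ξ)
    {η : ℝ → ℝ → n → ℝ} (hη : Continuous fun q : ℝ × ℝ => η q.1 q.2) (u₀ : ℝ) :
    ContinuousAt
      (fun u => ∫ t in Icc a b, ((Z t)ᵀ *ᵥ (J *ᵥ ξ t)) ⬝ᵥ ((Z t)ᵀ *ᵥ (J *ᵥ η u t))) u₀ := by
  refine continuousAt_setIntegral_comp_of_abs_apply_le
    (G := fun q => (q.1ᵀ *ᵥ (J *ᵥ ξ q.2.2)) ⬝ᵥ (q.1ᵀ *ᵥ (J *ᵥ η q.2.1 q.2.2))) ?_ hZ hC u₀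
  have hξ' : Continuous fun q : Matrix n p ℝ × ℝ × ℝ => ξ q.2.2 := hξ.comp continuous_snd.snd
  have hη' : Continuous fun q : Matrix n p ℝ × ℝ × ℝ => η q.2.1 q.2.2 := hη.comp continuous_snd
  fun_prop

end Transpose

theorem HasDerivAt.const_dotProduct {ι : Type*} [Fintype ι] {f : ℝ → ι → ℝ} {f' : ι → ℝ}
    {x : ℝ} (hf : HasDerivAt f f' x) (v : ι → ℝ) :
    HasDerivAt (fun u => v ⬝ᵥ f u) (v ⬝ᵥ f') x := by
  simp only [dotProduct]
  exact HasDerivAt.fun_sum fun i _ => ((hasDerivAt_pi.1 hf) i).const_mul (v i)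

theorem hasDerivAt_sub_mul_of_continuousAt {K : ℝ → ℝ} {s : ℝ} (hK : ContinuousAt K s) :
    HasDerivAt (fun u => (u - s) * K u) (K s) s := by
  rw [hasDerivAt_iff_tendsto_slope]
  refine (hK.tendsto.mono_left nhdsWithin_le_nhds).congr' ?_
  filter_upwards [self_mem_nhdsWithin] with u hu
  rw [slope_def_field, sub_self, zero_mul, sub_zero, mul_div_cancel_left₀ _ (sub_ne_zero.2 hu)]

theorem mulVec_dotProduct_add_dotProduct_mulVec {R n p : Type*} [CommRing R] [Fintype n]
    [Fintype p] {J : Matrix n n R} (hJ : Jᵀ = -J) (Z : Matrix n p R) (s u : R) (x y : n → R) :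
    (J *ᵥ (s • (Z * Zᵀ * J) *ᵥ x)) ⬝ᵥ y + (J *ᵥ x) ⬝ᵥ (u • (Z * Zᵀ * J) *ᵥ y)
      = (u - s) * ((Zᵀ *ᵥ (J *ᵥ x)) ⬝ᵥ (Zᵀ *ᵥ (J *ᵥ y))) := by
  have hadj : ∀ v w, v ⬝ᵥ (Z *ᵥ w) = (Zᵀ *ᵥ v) ⬝ᵥ w := fun v w => by
    rw [dotProduct_mulVec, mulVec_transpose]
  have hskew : ∀ w, (J *ᵥ (Z *ᵥ w)) ⬝ᵥ y = -((Zᵀ *ᵥ (J *ᵥ y)) ⬝ᵥ w) := fun w => by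
    rw [dotProduct_comm, dotProduct_mulVec, ← mulVec_transpose, hJ, neg_mulVec, neg_dotProduct,
      hadj]
  simp only [← mulVec_mulVec, mulVec_smul, smul_dotProduct, dotProduct_smul, hskew, hadj,
    smul_eq_mul, dotProduct_comm (Zᵀ *ᵥ (J *ᵥ y))]
  ring

theorem Jmat_transpose (d : ℕ) : (Jmat d)ᵀ = -Jmat d := by
  have h : (fromBlocks 0 (-1) 1 0 : Matrix (Fin d ⊕ Fin d) (Fin d ⊕ Fin d) ℝ)ᵀ
      = -fromBlocks 0 (-1) 1 0 := by
    simp [fromBlocks_transpose, fromBlocks_neg]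
  rw [Jmat, reindex_apply, transpose_submatrix, h]
  rfl

theorem Jmat_mulVec_dotProduct (d : ℕ) (x y : Fin (d + d) → ℝ) :
    (Jmat d *ᵥ x) ⬝ᵥ y = ∑ i : Fin d, (x (finSumFinEquiv (.inl i)) * y (finSumFinEquiv (.inr i))
      - x (finSumFinEquiv (.inr i)) * y (finSumFinEquiv (.inl i))) := by
  rw [dotProduct, ← finSumFinEquiv.sum_comp, Fintype.sum_sum_type, ← Finset.sum_add_distrib]
  refine Finset.sum_congr rfl fun i _ => ?_
  simp only [Jmat, reindex_apply, submatrix_mulVec_equiv, Equiv.symm_symm, Function.comp_apply,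
    fromBlocks_mulVec, Equiv.symm_apply_apply, Sum.elim_inl, Sum.elim_inr, zero_mulVec,
    neg_mulVec, one_mulVec, Pi.neg_apply, zero_add, add_zero]
  ring

theorem IsScaledJacobiSolution.Jmat_mulVec_dotProduct_eq {d m : ℕ}
    {Z : ℝ → Matrix (Fin (d + d)) (Fin m) ℝ} {s u : ℝ} {ξ η : ℝ → Fin (d + d) → ℝ}
    (hξ : IsScaledJacobiSolution Z s ξ) (hη : IsScaledJacobiSolution Z u η)
    (hZ : StronglyMeasurable Z) {C : ℝ} (hC : ∀ t ∈ Icc (0 : ℝ) 1, ∀ i j, |Z t i j| ≤ C)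
    (hξc : Continuous ξ) (hηc : Continuous η) :
    (Jmat d *ᵥ ξ 1) ⬝ᵥ η 1 = (Jmat d *ᵥ ξ 0) ⬝ᵥ η 0 + (u - s) *
      ∫ t in Icc (0 : ℝ) 1, ((Z t)ᵀ *ᵥ (Jmat d *ᵥ ξ t)) ⬝ᵥ ((Z t)ᵀ *ᵥ (Jmat d *ᵥ η t)) := by
  have hξi := intervalIntegrable_smul_mul_transpose_mulVec (J := Jmat d) hZ zero_le_one hC hξc s
  have hηi := intervalIntegrable_smul_mul_transpose_mulVec (J := Jmat d) hZ zero_le_one hC hηc u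
  let L := (mulVecLin (Jmat d)).toContinuousLinearMap
  have key := integral_dotProduct_add_dotProduct_eq_sub_of_eq_add_intervalIntegral zero_le_one
    ⟨L.integrable_comp hξi.1, L.integrable_comp hξi.2⟩ hηi (L.map_eq_add_intervalIntegral hξi hξ) hη
  simp only [L, LinearMap.coe_toContinuousLinearMap', mulVecLin_apply,
    mulVec_dotProduct_add_dotProduct_mulVec (Jmat_transpose d)] at key
  rw [intervalIntegral.integral_const_mul, intervalIntegral.integral_of_le zero_le_one,
    ← integral_Icc_eq_integral_Ioc] at key
  linarith

theorem jacobi_family_symplectic_identity_general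
    (d m : ℕ)
    (Z : ℝ → Matrix (Fin (d + d)) (Fin m) ℝ)
    (hZmeas : ∀ i j, Measurable fun t => Z t i j)
    (hZbdd : ∃ C : ℝ, ∀ t ∈ Set.Icc (0:ℝ) 1, ∀ i j, |Z t i j| ≤ C)
    (η ηs : ℝ → ℝ → Fin (d + d) → ℝ)
    (hηcont : Continuous fun p : ℝ × ℝ => η p.1 p.2)
    (hηsol : ∀ s : ℝ, IsScaledJacobiSolution Z s (η s))
    (hηderiv : ∀ (s t : ℝ), HasDerivAt (fun u : ℝ => η u t) (ηs s t) s)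
    (hq0 : ∀ (s : ℝ) (i : Fin d), η s 0 (finSumFinEquiv (Sum.inr i)) = 0) :
    ∀ s : ℝ, ((Jmat d).mulVec (η s 1)) ⬝ᵥ ηs s 1 =
      ∫ t in Set.Icc (0:ℝ) 1,
        ((Z t)ᵀ.mulVec ((Jmat d).mulVec (η s t))) ⬝ᵥ
          ((Z t)ᵀ.mulVec ((Jmat d).mulVec (η s t))) := by
  intro s
  obtain ⟨C, hC⟩ := hZbdd
  have hZ := stronglyMeasurable_of_measurable_apply hZmeas
  have hη (u : ℝ) : Continuous (η u) := hηcont.comp (continuous_const.prodMk continuous_id)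
  have hq' (i : Fin d) : ηs s 0 (finSumFinEquiv (.inr i)) = 0 := by
    have h := (hasDerivAt_pi.1 (hηderiv s 0)) (finSumFinEquiv (.inr i))
    simp only [hq0] at h
    exact h.unique (hasDerivAt_const s 0)
  have hpair := funext fun u =>
    (hηsol s).Jmat_mulVec_dotProduct_eq (hηsol u) hZ hC (hη s) (hη u)
  have h1 := (hηderiv s 1).const_dotProduct (Jmat d *ᵥ η s 1)
  have h0 := ((hηderiv s 0).const_dotProduct (Jmat d *ᵥ η s 0)).fun_add
    (hasDerivAt_sub_mul_of_continuousAt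
      (continuousAt_setIntegral_transpose_mulVec_dotProduct (J := Jmat d) hZ hC (hη s) hηcont s))
  rw [hpair] at h1
  rw [h1.unique h0, Jmat_mulVec_dotProduct]
  simp only [hq0, hq', mul_zero, zero_mul, sub_self, Finset.sum_const_zero, zero_add]

/-- (Key identity in the proof of Proposition 6.)  For a C¹ family `ηˢ` of
solutions of `η̇ = s Z_t Z_tᵀ J η` whose `q`-component vanishes at `t = 0`,
`⟨J ηˢ(1), ∂ηˢ/∂s(1)⟩ = ∫₀¹ |Z_tᵀ J ηˢ(t)|² dt`. -/
theorem jacobi_family_symplectic_identity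
    (d m : ℕ) (hd : 0 < d) (hm : 0 < m)
    (Z : ℝ → Matrix (Fin (d + d)) (Fin m) ℝ)
    (hZmeas : ∀ i j, Measurable fun t => Z t i j)
    (hZbdd : ∃ C : ℝ, ∀ t ∈ Set.Icc (0:ℝ) 1, ∀ i j, |Z t i j| ≤ C)
    (η ηs : ℝ → ℝ → Fin (d + d) → ℝ)
    (hηcont : Continuous fun p : ℝ × ℝ => η p.1 p.2)
    (hηscont : Continuous fun p : ℝ × ℝ => ηs p.1 p.2)
    (hηsol : ∀ s : ℝ, IsScaledJacobiSolution Z s (η s))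
    (hηderiv : ∀ (s t : ℝ), HasDerivAt (fun u : ℝ => η u t) (ηs s t) s)
    (hq0 : ∀ (s : ℝ) (i : Fin d), η s 0 (finSumFinEquiv (Sum.inr i)) = 0) :
    ∀ s : ℝ, ((Jmat d).mulVec (η s 1)) ⬝ᵥ ηs s 1 =
      ∫ t in Set.Icc (0:ℝ) 1,
        ((Z t)ᵀ.mulVec ((Jmat d).mulVec (η s t))) ⬝ᵥ
          ((Z t)ᵀ.mulVec ((Jmat d).mulVec (η s t))) :=
  jacobi_family_symplectic_identity_general d m Z hZmeas hZbdd η ηs hηcont hηsol hηderiv hq0
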